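/- arXiv:0708.2295 — 2 statements merged into one kernel-verified Lean document; each statement's English description precedes it below -/
import Mathlib

section
/- There exists a constant c > 0 such that for every finite group G of order n admitting a transitive action on a finite set of size m with m > 1, one has α(G) ≥ c·n/m^{1/2}; equivalently β(G) ≥ c·m^{−1/2}. -/
/-!
Fix `x₀ ∈ X` and a subset `T ⊆ X`. The set of `g` with `g • x₀ ∈ T` and `g • T ∩ T = ∅` is
product-free: if `a, b` lie in it then `(a * b) • x₀ = a • (b • x₀) ∈ a • T`, which misses `T`.
Choose `T` at random, containing each point independently with probability `p = 1 / (8 √m)`.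
A given `g` with `g • x₀ ≠ x₀` lies in the set with probability at least
`p - ∑ₜ p ^ #{g • x₀, t, g • t}`; the set `{g • x₀, t, g • t}` has three elements unless `t` is
fixed by `g` or `t ∈ {x₀, g • x₀}`, and by Burnside's lemma the fixed points of all `g` together
number `n`. Since at least half of `G` moves `x₀`, the expected size is at least
`n p / 2 - 3 n p² - n m p³ ≥ n / (128 √m)`.
-/

/-- A subset `S` of a group is product-free if there are no `a, b, c ∈ S`
(not necessarily distinct) with `a * b = c`. -/
def IsProductFree {G : Type*} [Group G] (S : Finset G) : Prop :=
  ∀ a ∈ S, ∀ b ∈ S, ∀ c ∈ S, a * b ≠ c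

/-- `α(G)`: the largest cardinality of a product-free subset of `G`. -/
noncomputable def alphaPF (G : Type*) [Group G] [Fintype G] : ℕ :=
  sSup {k | ∃ S : Finset G, IsProductFree S ∧ S.card = k}

open Finset

lemma IsProductFree.card_le_alphaPF {G : Type*} [Group G] [Fintype G] {S : Finset G}
    (hS : IsProductFree S) : #S ≤ alphaPF G :=
  le_csSup ⟨Fintype.card G, by rintro k ⟨S, -, rfl⟩; exact S.card_le_univ⟩ ⟨S, hS, rfl⟩

section BernoulliWeight

variable {X : Type*} [Fintype X] [DecidableEq X]

/-- The probability that a random subset of `X`, containing each point independently with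
probability `p`, equals `T`. -/
noncomputable def bernoulliWeight (p : ℝ) (T : Finset X) : ℝ := p ^ #T * (1 - p) ^ #Tᶜ

lemma bernoulliWeight_nonneg {p : ℝ} (hp₀ : 0 ≤ p) (hp₁ : p ≤ 1) (T : Finset X) :
    0 ≤ bernoulliWeight p T :=
  mul_nonneg (pow_nonneg hp₀ _) (pow_nonneg (sub_nonneg.2 hp₁) _)

lemma sum_bernoulliWeight_superset (p : ℝ) (A : Finset X) :
    ∑ T with A ⊆ T, bernoulliWeight p T = p ^ #A := by
  -- expand `∏ x, (p + (if x ∈ A then 0 else 1 - p))`, whose value is `p ^ #A`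
  have h := Fintype.prod_add (fun _ : X => p) (fun x => if x ∈ A then 0 else 1 - p)
  simp only [prod_const, add_ite, add_zero, add_sub_cancel] at h
  rw [Finset.prod_ite_mem, univ_inter, prod_const] at h
  rw [h, sum_filter]
  refine sum_congr rfl fun T _ => ?_
  split_ifs with hAT
  · rw [bernoulliWeight, prod_congr rfl fun x hx => if_neg fun hxA => mem_compl.1 hx (hAT hxA),
      prod_const]
  · obtain ⟨x, hxA, hxT⟩ := not_subset.1 hAT
    rw [Finset.prod_eq_zero (mem_compl.2 hxT)
      (if_pos hxA : (if x ∈ A then (0 : ℝ) else 1 - p) = 0), mul_zero]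

lemma sum_bernoulliWeight (p : ℝ) : ∑ T : Finset X, bernoulliWeight p T = 1 := by
  simpa using sum_bernoulliWeight_superset p (∅ : Finset X)

lemma exists_le_of_le_sum_bernoulliWeight_mul {p a : ℝ} (hp₀ : 0 ≤ p) (hp₁ : p ≤ 1)
    (f : Finset X → ℝ) (h : a ≤ ∑ T, bernoulliWeight p T * f T) : ∃ T, a ≤ f T := by
  obtain ⟨T₀, hT₀⟩ := Finite.exists_max f
  refine ⟨T₀, h.trans ?_⟩
  calc ∑ T, bernoulliWeight p T * f T ≤ ∑ T, bernoulliWeight p T * f T₀ :=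
        sum_le_sum fun T _ => mul_le_mul_of_nonneg_left (hT₀ T) (bernoulliWeight_nonneg hp₀ hp₁ T)
    _ = f T₀ := by rw [← sum_mul, sum_bernoulliWeight, one_mul]

end BernoulliWeight

section Action

variable {G X : Type*} [Group G] [MulAction G X] [DecidableEq X]

lemma card_le_two_mul_card_filter_smul_ne [Fintype G] [Fintype X]
    [MulAction.IsPretransitive G X] (hX : 1 < Fintype.card X) (x₀ : X) :
    Fintype.card G ≤ 2 * #{g : G | g • x₀ ≠ x₀} := by
  have hstab : #{g : G | g • x₀ = x₀} * Fintype.card X = Fintype.card G := by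
    have := (MulAction.stabilizer G x₀).card_mul_index
    rw [MulAction.index_stabilizer_of_transitive, Nat.card_eq_fintype_card,
      Nat.card_eq_fintype_card, Nat.card_eq_fintype_card, Fintype.card_subtype] at this
    simpa only [MulAction.mem_stabilizer_iff] using this
  have hsplit := card_filter_add_card_filter_not (s := univ) (fun g : G => g • x₀ = x₀)
  rw [card_univ] at hsplit
  have := hstab ▸ Nat.mul_le_mul_left #{g : G | g • x₀ = x₀} hX
  simp only [ne_eq]
  omega

lemma sum_card_filter_smul_eq_self_eq_card [Fintype G] [Fintype X] [MulAction.IsPretransitive G X]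
    [Nonempty X] : ∑ g : G, #{t : X | g • t = t} = Fintype.card G := by
  classical
  have hburnside := MulAction.sum_card_fixedBy_eq_card_orbits_mul_card_group G X
  have := (MulAction.pretransitive_iff_subsingleton_quotient G X).1 inferInstance
  have : Nonempty (MulAction.orbitRel.Quotient G X) := .map (Quotient.mk _) ‹_›
  rw [Fintype.card_eq_nat_card, Nat.card_unique, one_mul] at hburnside
  convert hburnside using 2 with g
  rw [Fintype.card_subtype]
  rfl

lemma pow_card_triple_le {p : ℝ} (hp₀ : 0 ≤ p) (hp₁ : p ≤ 1) {g : G} {x₀ : X} (hg : g • x₀ ≠ x₀)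
    (t : X) :
    p ^ #{g • x₀, t, g • t} ≤ if g • t = t ∨ t = g • x₀ ∨ t = x₀ then p ^ 2 else p ^ 3 := by
  split_ifs with ht
  · refine pow_le_pow_of_le_one hp₀ hp₁ (one_lt_card.2 ?_)
    by_cases htx : t = g • x₀
    · refine ⟨g • x₀, by simp, g • t, by simp, fun h => hg ?_⟩
      rw [smul_left_cancel_iff] at h
      exact (h.trans htx).symm
    · exact ⟨t, by simp, g • x₀, by simp, htx⟩
  · push Not at ht
    obtain ⟨hfix, htx, ht₀⟩ := ht
    rw [card_eq_three.2 ⟨_, _, _, Ne.symm htx, fun h => ht₀ (smul_left_cancel g h).symm,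
      Ne.symm hfix, rfl⟩]

lemma sum_pow_card_triple_le [Fintype X] {p : ℝ} (hp₀ : 0 ≤ p) (hp₁ : p ≤ 1) {g : G} {x₀ : X}
    (hg : g • x₀ ≠ x₀) :
    ∑ t : X, p ^ #{g • x₀, t, g • t}
      ≤ (#{t : X | g • t = t} + 2) * p ^ 2 + Fintype.card X * p ^ 3 := by
  have hsmall : #{t : X | g • t = t ∨ t = g • x₀ ∨ t = x₀} ≤ #{t : X | g • t = t} + 2 := by
    rw [filter_or, filter_or, filter_eq', filter_eq', if_pos (mem_univ _), if_pos (mem_univ _)]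
    have := card_union_le {g • x₀} {x₀}
    rw [card_singleton, card_singleton] at this
    exact (card_union_le _ _).trans (by omega)
  calc ∑ t : X, p ^ #{g • x₀, t, g • t}
      ≤ ∑ t : X, if g • t = t ∨ t = g • x₀ ∨ t = x₀ then p ^ 2 else p ^ 3 :=
        sum_le_sum fun t _ => pow_card_triple_le hp₀ hp₁ hg t
    _ = #{t : X | g • t = t ∨ t = g • x₀ ∨ t = x₀} * p ^ 2
          + #{t : X | ¬(g • t = t ∨ t = g • x₀ ∨ t = x₀)} * p ^ 3 := by
        rw [sum_ite, sum_const, sum_const, nsmul_eq_mul, nsmul_eq_mul]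
    _ ≤ (#{t : X | g • t = t} + 2) * p ^ 2 + Fintype.card X * p ^ 3 := by
        gcongr
        · exact_mod_cast hsmall
        · exact_mod_cast (card_filter_le _ _).trans_eq card_univ

variable [Fintype G]

def avoidingSet (x₀ : X) (T : Finset X) : Finset G :=
  {g | g • x₀ ∈ T ∧ ∀ t ∈ T, g • t ∉ T}

lemma isProductFree_avoidingSet (x₀ : X) (T : Finset X) :
    IsProductFree (avoidingSet (G := G) x₀ T) := by
  intro a ha b hb c hc hab
  simp only [avoidingSet, mem_filter, mem_univ, true_and] at ha hb hc
  exact ha.2 _ hb.1 (by rw [← mul_smul, hab]; exact hc.1)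

variable [Fintype X]

lemma boole_mem_avoidingSet_ge [DecidableEq G] (x₀ : X) (T : Finset X) (g : G) :
    (if g • x₀ ∈ T then 1 else 0 : ℝ) - ∑ t, (if {g • x₀, t, g • t} ⊆ T then 1 else 0)
      ≤ if g ∈ avoidingSet x₀ T then 1 else 0 := by
  have hsum : (0 : ℝ) ≤ ∑ t, (if {g • x₀, t, g • t} ⊆ T then 1 else 0) :=
    sum_nonneg fun _ _ => by positivity
  by_cases hg : g ∈ avoidingSet x₀ T
  · rw [if_pos hg]
    split_ifs <;> linarith
  · rw [if_neg hg]
    simp only [avoidingSet, mem_filter, mem_univ, true_and, not_and, not_forall, not_not] at hg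
    by_cases hgx : g • x₀ ∈ T
    · obtain ⟨t, ht, hgt⟩ := hg hgx
      have : (1 : ℝ) ≤ ∑ t, (if {g • x₀, t, g • t} ⊆ T then 1 else 0) := by
        refine le_trans ?_ (single_le_sum (fun _ _ => by positivity) (mem_univ t))
        simp [insert_subset_iff, hgx, ht, hgt]
      rw [if_pos hgx]
      linarith
    · rw [if_neg hgx]
      linarith

lemma sum_sub_sum_pow_le_sum_bernoulliWeight_mul_card {p : ℝ} (hp₀ : 0 ≤ p) (hp₁ : p ≤ 1)
    (x₀ : X) (D : Finset G) :
    ∑ g ∈ D, (p - ∑ t : X, p ^ #{g • x₀, t, g • t})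
      ≤ ∑ T, bernoulliWeight p T * #(avoidingSet (G := G) x₀ T) := by
  classical
  have hweight (A : Finset X) :
      ∑ T, bernoulliWeight p T * (if A ⊆ T then 1 else 0) = p ^ #A := by
    rw [← sum_bernoulliWeight_superset p A, sum_filter]
    simp only [mul_ite, mul_one, mul_zero]
  calc ∑ g ∈ D, (p - ∑ t : X, p ^ #{g • x₀, t, g • t})
      = ∑ g ∈ D, ∑ T, bernoulliWeight p T * ((if g • x₀ ∈ T then 1 else 0)
          - ∑ t, (if {g • x₀, t, g • t} ⊆ T then 1 else 0)) := by
        refine sum_congr rfl fun g _ => ?_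
        simp only [mul_sub, mul_sum, sum_sub_distrib]
        rw [sum_comm]
        simp only [← singleton_subset_iff, hweight, card_singleton, pow_one]
    _ ≤ ∑ g ∈ D, ∑ T, bernoulliWeight p T * (if g ∈ avoidingSet x₀ T then 1 else 0) :=
        sum_le_sum fun g _ => sum_le_sum fun T _ => mul_le_mul_of_nonneg_left
          (boole_mem_avoidingSet_ge x₀ T g) (bernoulliWeight_nonneg hp₀ hp₁ T)
    _ ≤ ∑ g, ∑ T, bernoulliWeight p T * (if g ∈ avoidingSet x₀ T then 1 else 0) :=
        sum_le_sum_of_subset_of_nonneg (subset_univ D) fun g _ _ =>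
          sum_nonneg fun T _ => mul_nonneg (bernoulliWeight_nonneg hp₀ hp₁ T) (by positivity)
    _ = ∑ T, bernoulliWeight p T * #(avoidingSet (G := G) x₀ T) := by
        rw [sum_comm]
        simp only [← mul_sum, sum_boole, filter_mem_eq_inter, univ_inter]

lemma sum_bernoulliWeight_mul_card_avoidingSet_ge [MulAction.IsPretransitive G X]
    (hX : 1 < Fintype.card X) (x₀ : X) {p : ℝ} (hp₀ : 0 ≤ p) (hp₁ : p ≤ 1) :
    Fintype.card G / 2 * p - 3 * Fintype.card G * p ^ 2
        - Fintype.card G * Fintype.card X * p ^ 3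
      ≤ ∑ T, bernoulliWeight p T * #(avoidingSet (G := G) x₀ T) := by
  have : Nonempty X := ⟨x₀⟩
  set D : Finset G := {g | g • x₀ ≠ x₀}
  have hD : (Fintype.card G : ℝ) ≤ 2 * #D := by
    exact_mod_cast card_le_two_mul_card_filter_smul_ne hX x₀
  have hDG : (#D : ℝ) ≤ Fintype.card G := by exact_mod_cast card_le_univ D
  have hfix : ∑ g ∈ D, (#{t : X | g • t = t} : ℝ) ≤ Fintype.card G := by
    rw [← sum_card_filter_smul_eq_self_eq_card (G := G) (X := X), Nat.cast_sum]
    exact sum_le_sum_of_subset_of_nonneg (subset_univ D) fun _ _ _ => by positivity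
  calc _ ≤ ∑ g ∈ D, (p - ((#{t : X | g • t = t} + 2) * p ^ 2 + Fintype.card X * p ^ 3)) := by
        simp only [sum_sub_distrib, sum_add_distrib, ← sum_mul, sum_const, nsmul_eq_mul]
        have := mul_le_mul_of_nonneg_right hfix (sq_nonneg p)
        have := mul_le_mul_of_nonneg_right hDG (mul_nonneg (Nat.cast_nonneg (Fintype.card X))
          (pow_nonneg hp₀ 3))
        nlinarith
    _ ≤ ∑ g ∈ D, (p - ∑ t : X, p ^ #{g • x₀, t, g • t}) :=
        sum_le_sum fun g hg => sub_le_sub_left (sum_pow_card_triple_le hp₀ hp₁ (mem_filter.1 hg).2) p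
    _ ≤ _ := sum_sub_sum_pow_le_sum_bernoulliWeight_mul_card hp₀ hp₁ x₀ D

end Action

/-- There is a constant `c > 0` such that every finite group `G` of order `n`
admitting a transitive action on a set of size `m > 1` satisfies
`α(G) ≥ c·n/√m`, i.e. `β(G) ≥ c·m^{-1/2}`. -/
theorem alpha_lower_bound_sqrt :
    ∃ c : ℝ, 0 < c ∧
      ∀ (G : Type) [Group G] [Fintype G] (X : Type) [Fintype X] [MulAction G X],
        MulAction.IsPretransitive G X → 1 < Fintype.card X →
        c * Fintype.card G / Real.sqrt (Fintype.card X) ≤ (alphaPF G : ℝ) := by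
  refine ⟨1 / 128, by norm_num, fun G _ _ X _ _ _ hX => ?_⟩
  classical
  obtain ⟨x₀⟩ : Nonempty X := Fintype.card_pos_iff.mp (by omega)
  set n : ℝ := (Fintype.card G : ℝ)
  set s := Real.sqrt (Fintype.card X)
  have hs : 1 ≤ s := Real.one_le_sqrt.2 (by exact_mod_cast hX.le)
  have hp₀ : 0 ≤ 1 / (8 * s) := by positivity
  have hp₁ : 1 / (8 * s) ≤ 1 := by rw [div_le_one (by positivity)]; linarith
  obtain ⟨T, hT⟩ := exists_le_of_le_sum_bernoulliWeight_mul hp₀ hp₁ _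
    (sum_bernoulliWeight_mul_card_avoidingSet_ge (G := G) hX x₀ hp₀ hp₁)
  calc 1 / 128 * n / s
      ≤ n / 2 * (1 / (8 * s)) - 3 * n * (1 / (8 * s)) ^ 2 - n * s ^ 2 * (1 / (8 * s)) ^ 3 := by
        have hn : 0 ≤ n := Nat.cast_nonneg _
        field_simp
        ring_nf
        nlinarith [mul_nonneg hn (sub_nonneg.2 hs), mul_nonneg (mul_nonneg hn (sub_nonneg.2 hs))
          (zero_le_one.trans hs)]
    _ ≤ #(avoidingSet (G := G) x₀ T) := by rwa [Real.sq_sqrt (Nat.cast_nonneg _)]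
    _ ≤ alphaPF G := by exact_mod_cast (isProductFree_avoidingSet x₀ T).card_le_alphaPF
end

section
/- (Gowers) Let G be a finite group of order n, and let δ > 0 be a real number such that every nonzero finite-dimensional real representation of G having no nonzero G-invariant vector has dimension at least δ. Then every product-free subset S of G satisfies (#S)³ · δ ≤ n³; that is, β(G) ≤ δ^{−1/3}. -/
/-!
Let `f = 1_S - |S|/n` be the balanced function of `S` and `M` the matrix of `v ↦ f ∗ v`,
`(f ∗ v)(x) = ∑_y f(x y⁻¹) v(y)`. Since `M` commutes with right translations, so does `MᵀM`, and
each eigenspace of `MᵀM` for an eigenvalue `μ ≠ 0` is a subrepresentation of the right regular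
representation; it has no nonzero invariant vector because `f` has mean zero, so `M` kills the
constants. Hence its dimension is at least `δ`, while by Bessel's inequality `μ` times that
dimension is at most the squared Hilbert–Schmidt norm `‖M‖₂² = n ‖f‖²`. So `δ ‖f ∗ v‖² ≤ n ‖f‖² ‖v‖²`.
If `S` is product-free then `⟨1_S, f ∗ 1_S⟩ = -|S|³/n`, and Cauchy–Schwarz with
`‖f‖² ≤ |S| = ‖1_S‖²` gives `δ |S|⁶ / n² ≤ n |S|³`.
-/

open Module End Matrix
open scoped RealInnerProductSpace

section Spectral

variable {E : Type*} [NormedAddCommGroup E] [InnerProductSpace ℝ E] [FiniteDimensional ℝ E]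

theorem LinearMap.IsSymmetric.inner_map_self_le_of_hasEigenvalue_le {T : E →ₗ[ℝ] E}
    (hT : T.IsSymmetric) {c : ℝ} (hc : ∀ μ, HasEigenvalue T μ → μ ≤ c) (v : E) :
    ⟪T v, v⟫ ≤ c * ‖v‖ ^ 2 := by
  set b := hT.eigenvectorBasis rfl
  have hTb : ∀ i, ⟪T v, b i⟫ = hT.eigenvalues rfl i * ⟪b i, v⟫ := fun i => by
    rw [hT, hT.apply_eigenvectorBasis, RCLike.ofReal_real_eq_id, id_eq, real_inner_smul_right,
      real_inner_comm]
  calc ⟪T v, v⟫ = ∑ i, hT.eigenvalues rfl i * ⟪b i, v⟫ ^ 2 := by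
        simp_rw [← b.sum_inner_mul_inner (T v) v, hTb, sq, mul_assoc]
    _ ≤ ∑ i, c * ⟪b i, v⟫ ^ 2 := by
        gcongr with i
        exact hc _ (hT.hasEigenvalue_eigenvalues rfl i)
    _ = c * ‖v‖ ^ 2 := by rw [← Finset.mul_sum, b.sum_sq_inner_right]

theorem mul_finrank_eigenspace_le_sum_norm_sq {ι : Type*} [Fintype ι] (r : ι → E)
    {T : E →ₗ[ℝ] E} (hT : ∀ v, ⟪T v, v⟫ = ∑ x, ⟪r x, v⟫ ^ 2) (μ : ℝ) :
    μ * finrank ℝ (eigenspace T μ) ≤ ∑ x, ‖r x‖ ^ 2 := by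
  set W := eigenspace T μ
  set b := stdOrthonormalBasis ℝ W
  have hb : Orthonormal ℝ (W.subtypeₗᵢ ∘ b) := b.orthonormal.comp_linearIsometry _
  have hμ : ∀ i, μ = ∑ x, ⟪r x, b i⟫ ^ 2 := fun i => by
    rw [← hT, mem_eigenspace_iff.mp (b i).2, real_inner_smul_left, real_inner_self_eq_norm_sq,
      show ‖(b i : E)‖ = 1 from hb.1 i, one_pow, mul_one]
  calc μ * finrank ℝ W = ∑ _i : Fin (finrank ℝ W), μ := by simp [mul_comm]
    _ = ∑ i, ∑ x, ⟪r x, b i⟫ ^ 2 := Finset.sum_congr rfl fun i _ => hμ i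
    _ = ∑ x, ∑ i, ⟪(W.subtypeₗᵢ ∘ b) i, r x⟫ ^ 2 := by
        rw [Finset.sum_comm]
        simp_rw [real_inner_comm]
        rfl
    _ ≤ ∑ x, ‖r x‖ ^ 2 := by
        gcongr with x
        simpa using hb.sum_inner_products_le (s := Finset.univ) (r x)

end Spectral

section RealMatrix

variable {ι G : Type*} [Fintype ι] [Fintype G] [DecidableEq G]

theorem Matrix.inner_toEuclideanLin_conjTranspose_mul_self (M : Matrix ι G ℝ)
    (v : EuclideanSpace ℝ G) :
    ⟪toEuclideanLin (Mᴴ * M) v, v⟫ = ‖toEuclideanLin M v‖ ^ 2 := by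
  rw [← real_inner_self_eq_norm_sq]
  simp only [EuclideanSpace.inner_eq_star_dotProduct, ofLp_toLpLin, toLin'_apply, star_trivial]
  rw [← mulVec_mulVec, dotProduct_mulVec, conjTranspose_eq_transpose_of_trivial, vecMul_transpose]

theorem Matrix.norm_sq_toEuclideanLin (M : Matrix ι G ℝ) (v : EuclideanSpace ℝ G) :
    ‖toEuclideanLin M v‖ ^ 2 = ∑ x, ⟪WithLp.toLp 2 (M x), v⟫ ^ 2 := by
  simp [EuclideanSpace.real_norm_sq_eq, EuclideanSpace.inner_eq_star_dotProduct, mulVec,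
    dotProduct_comm]

end RealMatrix

/-- Gowers' `δ`-quasirandomness, in its form for real representations. -/
def IsQuasirandom (G : Type) [Group G] (δ : ℝ) : Prop :=
  ∀ (V : Type) [AddCommGroup V] [Module ℝ V] [FiniteDimensional ℝ V]
    (ρ : Representation ℝ G V), Nontrivial V →
    (∀ v : V, (∀ g : G, ρ g v = v) → v = 0) → δ ≤ finrank ℝ V

theorem IsQuasirandom.le_finrank_eigenspace {G : Type} [Group G] {δ : ℝ}
    (hG : IsQuasirandom G δ) {V : Type} [AddCommGroup V] [Module ℝ V] [FiniteDimensional ℝ V]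
    (ρ : Representation ℝ G V) {T : End ℝ V} (hT : ∀ g, Commute T (ρ g)) {μ : ℝ}
    (hμ : HasEigenvalue T μ) (hfix : ∀ v ∈ eigenspace T μ, (∀ g, ρ g v = v) → v = 0) :
    δ ≤ finrank ℝ (eigenspace T μ) := by
  let σ : Subrepresentation ρ :=
    ⟨eigenspace T μ, fun g => mapsTo_genEigenspace_of_comm (hT g) μ 1⟩
  have : Nontrivial (eigenspace T μ) := Submodule.nontrivial_iff_ne_bot.mpr hμ
  exact hG _ σ.toRepresentation this fun v hv =>
    Subtype.ext (hfix v v.2 fun g => congrArg Subtype.val (hv g))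

section RightRegular

variable {G : Type} [Group G]

variable (G) in
noncomputable def euclideanRightRegular : Representation ℝ G (EuclideanSpace ℝ G) :=
  (LinearEquiv.conjAlgEquiv ℝ (WithLp.linearEquiv 2 ℝ (G → ℝ)).symm).toMonoidHom.comp
    TannakaDuality.FiniteGroup.rightRegular

@[simp]
theorem euclideanRightRegular_apply (g : G) (v : EuclideanSpace ℝ G) (x : G) :
    euclideanRightRegular G g v x = v (x * g) := rfl

theorem eq_apply_one_of_forall_euclideanRightRegular_eq {v : EuclideanSpace ℝ G}
    (hv : ∀ g, euclideanRightRegular G g v = v) (x : G) : v x = v 1 := by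
  simpa using congrFun (congrArg WithLp.ofLp (hv x)) 1

variable [Fintype G]

theorem commute_toEuclideanLin_euclideanRightRegular [DecidableEq G] {N : Matrix G G ℝ}
    (hN : ∀ x y g, N (x * g) (y * g) = N x y) (g : G) :
    Commute (toEuclideanLin N) (euclideanRightRegular G g) := by
  ext v x
  simp only [Module.End.mul_apply, ofLp_toLpLin, euclideanRightRegular_apply]
  exact Fintype.sum_equiv (Equiv.mulRight g) _ _ fun y => by simp [hN]

theorem conjTranspose_mul_self_apply_mul_mul {M : Matrix G G ℝ}
    (hM : ∀ x y g, M (x * g) (y * g) = M x y) (x y g : G) :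
    (Mᴴ * M) (x * g) (y * g) = (Mᴴ * M) x y := by
  simp only [Matrix.mul_apply, conjTranspose_apply, star_trivial]
  exact (Fintype.sum_equiv (Equiv.mulRight g) _ _ fun z => by simp [hM]).symm

end RightRegular

section Convolution

variable {G : Type} [Group G]

def convMatrix (f : G → ℝ) : Matrix G G ℝ := Matrix.of fun x y => f (x * y⁻¹)

theorem convMatrix_apply_mul_mul (f : G → ℝ) (x y g : G) :
    convMatrix f (x * g) (y * g) = convMatrix f x y := by
  simp [convMatrix, mul_assoc]

variable [Fintype G]

theorem sum_apply_mul_inv {M : Type*} [AddCommMonoid M] (φ : G → M) (x : G) :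
    ∑ y, φ (x * y⁻¹) = ∑ y, φ y :=
  Fintype.sum_equiv ((Equiv.inv G).trans (Equiv.mulLeft x)) _ _ fun _ => rfl

theorem convMatrix_mulVec_eq_zero {f : G → ℝ} (hf : ∑ x, f x = 0) {v : EuclideanSpace ℝ G}
    (hv : ∀ g, euclideanRightRegular G g v = v) : convMatrix f *ᵥ WithLp.ofLp v = 0 := by
  ext x
  simp only [mulVec, dotProduct, convMatrix, of_apply,
    eq_apply_one_of_forall_euclideanRightRegular_eq hv, ← Finset.sum_mul, Pi.zero_apply]
  rw [sum_apply_mul_inv, hf, zero_mul]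

theorem sum_norm_sq_convMatrix_row (f : G → ℝ) :
    ∑ x, ‖WithLp.toLp 2 (convMatrix f x)‖ ^ 2 = Fintype.card G * ∑ x, f x ^ 2 := by
  simp only [EuclideanSpace.real_norm_sq_eq, convMatrix, of_apply]
  simp [sum_apply_mul_inv (fun z => f z ^ 2)]

variable [DecidableEq G]

theorem IsQuasirandom.mul_norm_sq_toEuclideanLin_convMatrix_le {δ : ℝ}
    (hG : IsQuasirandom G δ) {f : G → ℝ} (hf : ∑ x, f x = 0) (v : EuclideanSpace ℝ G) :
    δ * ‖toEuclideanLin (convMatrix f) v‖ ^ 2 ≤ Fintype.card G * (∑ x, f x ^ 2) * ‖v‖ ^ 2 := by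
  set M := convMatrix f
  set C : ℝ := Fintype.card G * ∑ x, f x ^ 2
  rcases le_or_gt δ 0 with hδ | hδ
  · have : 0 ≤ C := by positivity
    nlinarith [sq_nonneg ‖toEuclideanLin M v‖, sq_nonneg ‖v‖]
  set T := toEuclideanLin (Mᴴ * M)
  have hT : T.IsSymmetric :=
    isSymmetric_toEuclideanLin_iff.mpr (isHermitian_conjTranspose_mul_self M)
  have hTrows : ∀ w, ⟪T w, w⟫ = ∑ x, ⟪WithLp.toLp 2 (M x), w⟫ ^ 2 := fun w => by
    rw [inner_toEuclideanLin_conjTranspose_mul_self, norm_sq_toEuclideanLin]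
  have hcomm : ∀ g, Commute T (euclideanRightRegular G g) :=
    commute_toEuclideanLin_euclideanRightRegular
      (conjTranspose_mul_self_apply_mul_mul (convMatrix_apply_mul_mul f))
  have heig : ∀ μ, HasEigenvalue T μ → μ ≤ C / δ := by
    intro μ hμ
    rcases le_or_gt μ 0 with hμ0 | hμ0
    · exact hμ0.trans (by positivity)
    have hfix : ∀ w ∈ eigenspace T μ, (∀ g, euclideanRightRegular G g w = w) → w = 0 := by
      intro w hw hinv
      have hTw : T w = 0 := by
        rw [toLpLin_apply, ← mulVec_mulVec, convMatrix_mulVec_eq_zero hf hinv, mulVec_zero]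
        rfl
      rw [mem_eigenspace_iff, hTw] at hw
      exact (smul_eq_zero.mp hw.symm).resolve_left hμ0.ne'
    have hdim := hG.le_finrank_eigenspace (euclideanRightRegular G) hcomm hμ hfix
    have hmult := mul_finrank_eigenspace_le_sum_norm_sq _ hTrows μ
    rw [sum_norm_sq_convMatrix_row] at hmult
    rw [le_div_iff₀ hδ]
    nlinarith
  have hrayleigh := hT.inner_map_self_le_of_hasEigenvalue_le heig v
  rw [inner_toEuclideanLin_conjTranspose_mul_self] at hrayleigh
  calc δ * ‖toEuclideanLin M v‖ ^ 2 ≤ δ * (C / δ * ‖v‖ ^ 2) := by gcongr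
    _ = C * ‖v‖ ^ 2 := by field_simp

theorem IsQuasirandom.mul_inner_sq_le {δ : ℝ} (hG : IsQuasirandom G δ) {f : G → ℝ}
    (hf : ∑ x, f x = 0) (v w : EuclideanSpace ℝ G) :
    δ * ⟪w, toEuclideanLin (convMatrix f) v⟫ ^ 2 ≤
      Fintype.card G * (∑ x, f x ^ 2) * ‖v‖ ^ 2 * ‖w‖ ^ 2 := by
  set u := toEuclideanLin (convMatrix f) v
  rcases le_or_gt δ 0 with hδ | hδ
  · have : 0 ≤ Fintype.card G * (∑ x, f x ^ 2) * ‖v‖ ^ 2 * ‖w‖ ^ 2 := by positivity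
    nlinarith [sq_nonneg ⟪w, u⟫]
  calc δ * ⟪w, u⟫ ^ 2 ≤ δ * (‖w‖ ^ 2 * ‖u‖ ^ 2) := by
        gcongr
        simpa only [sq_abs, mul_pow] using
          pow_le_pow_left₀ (abs_nonneg _) (abs_real_inner_le_norm w u) 2
    _ = ‖w‖ ^ 2 * (δ * ‖u‖ ^ 2) := by ring
    _ ≤ ‖w‖ ^ 2 * (Fintype.card G * (∑ x, f x ^ 2) * ‖v‖ ^ 2) :=
        mul_le_mul_of_nonneg_left (hG.mul_norm_sq_toEuclideanLin_convMatrix_le hf v)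
          (by positivity)
    _ = _ := by ring

end Convolution

section ProductFree

variable {G : Type} [Fintype G] [DecidableEq G]

noncomputable def indicatorVec (S : Finset G) : EuclideanSpace ℝ G :=
  WithLp.toLp 2 fun x => if x ∈ S then 1 else 0

noncomputable def balancedFun (S : Finset G) (x : G) : ℝ :=
  indicatorVec S x - S.card / Fintype.card G

theorem norm_sq_indicatorVec (S : Finset G) : ‖indicatorVec S‖ ^ 2 = S.card := by
  simp [EuclideanSpace.real_norm_sq_eq, indicatorVec]

theorem sum_balancedFun [Nonempty G] (S : Finset G) : ∑ x, balancedFun S x = 0 := by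
  have hn : (Fintype.card G : ℝ) ≠ 0 := Nat.cast_ne_zero.2 Fintype.card_ne_zero
  simp [balancedFun, indicatorVec, Finset.sum_sub_distrib, mul_div_cancel₀ _ hn]

theorem sum_balancedFun_sq [Nonempty G] (S : Finset G) :
    ∑ x, balancedFun S x ^ 2 = S.card - S.card ^ 2 / Fintype.card G := by
  have hn : (Fintype.card G : ℝ) ≠ 0 := Nat.cast_ne_zero.2 Fintype.card_ne_zero
  set c : ℝ := S.card / Fintype.card G
  have hsq : ∀ x, balancedFun S x ^ 2 = (1 - 2 * c) * indicatorVec S x + c ^ 2 := fun x => by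
    by_cases hx : x ∈ S
    · simp only [balancedFun, indicatorVec, hx, ↓reduceIte, mul_one, c]
      ring
    · simp [balancedFun, indicatorVec, hx, c]
  simp only [hsq, Finset.sum_add_distrib, ← Finset.mul_sum]
  simp only [indicatorVec, Finset.sum_ite_mem, Finset.univ_inter, Finset.sum_const, nsmul_eq_mul,
    mul_one, Finset.card_univ, c]
  field_simp
  ring

theorem IsProductFree.inner_indicatorVec_convMatrix_balancedFun [Group G] {S : Finset G}
    (hS : IsProductFree S) :
    ⟪indicatorVec S, toEuclideanLin (convMatrix (balancedFun S)) (indicatorVec S)⟫ =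
      -(S.card ^ 3 / Fintype.card G) := by
  have hempty : ∀ x ∈ S, S.filter (fun y => x * y⁻¹ ∈ S) = ∅ := fun x hx =>
    Finset.filter_false_of_mem fun y hy hxy => hS _ hxy y hy x hx (inv_mul_cancel_right x y)
  simp only [indicatorVec, convMatrix, balancedFun, toLpLin_toLp, toLin'_apply,
    EuclideanSpace.inner_eq_star_dotProduct, dotProduct, mulVec, of_apply, mul_ite, mul_one, mul_zero,
    Finset.sum_ite_mem, Finset.univ_inter, Finset.sum_sub_distrib, Finset.sum_boole, Finset.sum_const,
    nsmul_eq_mul, Pi.star_apply, star_trivial]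
  rw [Finset.sum_eq_zero fun x hx => by simp [hempty x hx]]
  ring

end ProductFree

theorem gowers_product_free_bound_general {G : Type} [Group G] [Fintype G]
    (δ : ℝ)
    (hrep : ∀ (V : Type) [AddCommGroup V] [Module ℝ V] [FiniteDimensional ℝ V]
      (ρ : Representation ℝ G V), Nontrivial V →
      (∀ v : V, (∀ g : G, ρ g v = v) → v = 0) →
      δ ≤ Module.finrank ℝ V)
    (S : Finset G) (hS : IsProductFree S) :
    (S.card : ℝ) ^ 3 * δ ≤ (Fintype.card G : ℝ) ^ 3 := by
  classical
  have hmix := IsQuasirandom.mul_inner_sq_le hrep (sum_balancedFun S) (indicatorVec S)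
    (indicatorVec S)
  rw [hS.inner_indicatorVec_convMatrix_balancedFun, norm_sq_indicatorVec,
    sum_balancedFun_sq] at hmix
  set s : ℝ := (S.card : ℝ)
  set n : ℝ := (Fintype.card G : ℝ)
  have hn : 0 < n := Nat.cast_pos.2 Fintype.card_pos
  have hs : 0 ≤ s := Nat.cast_nonneg _
  have hbound : δ * s ^ 6 ≤ n ^ 3 * s ^ 3 := by
    have : δ * (s ^ 3 / n) ^ 2 ≤ n * s ^ 3 := by
      calc δ * (s ^ 3 / n) ^ 2 ≤ n * (s - s ^ 2 / n) * s * s := by simpa using hmix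
        _ ≤ n * s ^ 3 := by
          rw [mul_sub, mul_div_cancel₀ _ hn.ne']
          nlinarith [pow_nonneg hs 4]
    rw [div_pow, mul_div_assoc', div_le_iff₀ (by positivity)] at this
    linarith
  rcases hs.eq_or_lt with hs0 | hs0
  · simp [← hs0, hn.le]
  exact le_of_mul_le_mul_left (by linear_combination hbound) (pow_pos hs0 3)

/-- Gowers: let `G` be a finite group of order `n` such that every nonzero
finite-dimensional real representation of `G` with no nonzero invariant
vector has dimension at least `δ > 0`. Then every product-free subset `S` of
`G` satisfies `(#S)³ · δ ≤ n³`, i.e. `β(G) ≤ δ^{-1/3}`. -/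
theorem gowers_product_free_bound {G : Type} [Group G] [Fintype G]
    (δ : ℝ) (hδ : 0 < δ)
    (hrep : ∀ (V : Type) [AddCommGroup V] [Module ℝ V] [FiniteDimensional ℝ V]
      (ρ : Representation ℝ G V), Nontrivial V →
      (∀ v : V, (∀ g : G, ρ g v = v) → v = 0) →
      δ ≤ Module.finrank ℝ V)
    (S : Finset G) (hS : IsProductFree S) :
    (S.card : ℝ) ^ 3 * δ ≤ (Fintype.card G : ℝ) ^ 3 :=
  gowers_product_free_bound_general δ hrep S hS
end
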